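/- arXiv:2209.15207 — 2 statements merged into one kernel-verified Lean document; each statement's English description precedes it below -/
import Mathlib

section
/- Let H : Y × Z → [0,1] be continuous where Z is a compact metric space and for each z, H(·, z) is tight in the sense that for every ε > 0 and each fixed z there is a compact set Ỹ_z ⊆ Y with H-mass at least 1 − ε/2; then there exists a single compact set Ỹ* ⊆ Y such that H(Ỹ* | z) ≥ 1 − ε for all z ∈ Z. -/
open MeasureTheory

theorem uniformly_tight_of_continuous_family {Y Z : Type*}
    [MetricSpace Y] [MeasurableSpace Y] [BorelSpace Y]
    [MetricSpace Z] [CompactSpace Z]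
    (H : Z → Measure Y) [∀ z, IsProbabilityMeasure (H z)]
    (hcont : ∀ A : Set Y, IsClosed A → Continuous fun z => (H z A).toReal)
    (htight : ∀ ε : ℝ, 0 < ε → ∀ z : Z, ∃ Ytilde : Set Y, IsCompact Ytilde ∧
      1 - ENNReal.ofReal (ε / 2) ≤ H z Ytilde) :
    ∀ ε : ℝ, 0 < ε → ∃ Ystar : Set Y, IsCompact Ystar ∧
      ∀ z : Z, 1 - ENNReal.ofReal ε ≤ H z Ystar := by
  intro ε hε
  choose K hKc hK using htight ε hε
  have hfin : ∀ z (A : Set Y), H z A ≠ ⊤ := fun z A => measure_ne_top _ _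
  have hKreal : ∀ z, 1 - ε / 2 ≤ (H z (K z)).toReal := by
    intro z
    rw [← ENNReal.ofReal_le_iff_le_toReal (hfin z _)]
    refine le_trans (le_of_eq ?_) (hK z)
    rw [ENNReal.ofReal_sub _ (by linarith : (0:ℝ) ≤ ε / 2), ENNReal.ofReal_one]
  set W : Z → Set Z := fun z => {z' | 1 - ε < (H z' (K z)).toReal} with hW
  have hWopen : ∀ z, IsOpen (W z) := fun z =>
    isOpen_lt continuous_const (hcont (K z) (hKc z).isClosed)
  have hmem : ∀ z, z ∈ W z := fun z => lt_of_lt_of_le (by linarith) (hKreal z)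
  obtain ⟨t, ht⟩ := isCompact_univ.elim_nhds_subcover W
    (fun z _ => (hWopen z).mem_nhds (hmem z))
  refine ⟨⋃ z ∈ t, K z, t.finite_toSet.isCompact_biUnion (fun z _ => hKc z), ?_⟩
  intro z
  obtain ⟨x, hx, hzx⟩ := Set.mem_iUnion₂.mp (ht.2 (Set.mem_univ z))
  have h1 : 1 - ε ≤ (H z (⋃ z ∈ t, K z)).toReal := by
    refine le_trans (le_of_lt hzx) ?_
    exact ENNReal.toReal_mono (hfin z _) (measure_mono (Set.subset_biUnion_of_mem hx))
  calc 1 - ENNReal.ofReal ε = ENNReal.ofReal (1 - ε) := by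
        rw [ENNReal.ofReal_sub _ hε.le, ENNReal.ofReal_one]
    _ ≤ H z _ := ENNReal.ofReal_le_of_le_toReal h1
end

section
/- Let D ≥ 2 and let w₀ < w₁ < ... < w_D be real numbers. There exist real coefficients (β_{d,0}, β_{d,1}) for d = 0, 1, ..., D+1 such that for every w ∈ ℝ, the index d maximizing β_{d,0} + β_{d,1}·w is unique and equals d if and only if w lies in the interior of the interval I_d, where I_0 = (−∞, w₀], I_d = (w_{d−1}, w_d] for 1 ≤ d ≤ D, and I_{D+1} = (w_D, ∞). -/
/-!
Take the lines `L n x = n * x - (g 0 + ⋯ + g (n - 1))` with slopes `0, 1, 2, …`, where `g`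
lists the partition points. Then `L n - L m = ∑_{m ≤ k < n} (x - g k)` telescopes, so
consecutive lines `L n`, `L (n + 1)` cross exactly at `g n`, and since `g` is monotone, `L d`
beats every other line iff `x` lies strictly between `g (d - 1)` and `g d`.
-/

/-- Interior of the `d`-th interval in the partition of `ℝ` determined by
points `w 0 < w 1 < ... < w D`: `I 0 = (-∞, w 0]`, `I d = (w (d-1), w d]`
for `1 ≤ d ≤ D`, and `I (D+1) = (w D, ∞)`. -/
def intervalInterior (D : ℕ) (w : Fin (D + 1) → ℝ) (d : Fin (D + 2)) : Set ℝ :=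
  if h0 : d.val = 0 then Set.Iio (w 0)
  else if hD : d.val = D + 1 then Set.Ioi (w (Fin.last D))
  else Set.Ioo (w ⟨d.val - 1, by omega⟩) (w ⟨d.val, by have := d.isLt; omega⟩)

open Finset

def cumulativeLine (g : ℕ → ℝ) (n : ℕ) (x : ℝ) : ℝ := -∑ k ∈ range n, g k + n * x

namespace cumulativeLine

variable {g : ℕ → ℝ} {x : ℝ} {m n : ℕ}

lemma sub_eq_sum_Ico (h : m ≤ n) :
    cumulativeLine g n x - cumulativeLine g m x = ∑ k ∈ Ico m n, (x - g k) := by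
  rw [sum_sub_distrib, sum_const, Nat.card_Ico, nsmul_eq_mul, sum_Ico_eq_sub _ h,
    Nat.cast_sub h, cumulativeLine, cumulativeLine]
  ring

lemma lt_of_forall_lt (hmn : m < n) (h : ∀ k ∈ Ico m n, g k < x) :
    cumulativeLine g m x < cumulativeLine g n x := by
  rw [← sub_pos, sub_eq_sum_Ico hmn.le]
  exact sum_pos (fun k hk => sub_pos.2 (h k hk)) ⟨m, mem_Ico.2 ⟨le_rfl, hmn⟩⟩

lemma lt_of_forall_gt (hmn : m < n) (h : ∀ k ∈ Ico m n, x < g k) :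
    cumulativeLine g n x < cumulativeLine g m x := by
  rw [← sub_neg, sub_eq_sum_Ico hmn.le]
  exact sum_neg (fun k hk => sub_neg.2 (h k hk)) ⟨m, mem_Ico.2 ⟨le_rfl, hmn⟩⟩

lemma succ_sub : cumulativeLine g (n + 1) x - cumulativeLine g n x = x - g n := by
  rw [sub_eq_sum_Ico n.le_succ, Nat.Ico_succ_singleton, sum_singleton]

lemma lt_succ_iff : cumulativeLine g n x < cumulativeLine g (n + 1) x ↔ g n < x := by
  rw [← sub_pos, succ_sub, sub_pos]

lemma succ_lt_iff : cumulativeLine g (n + 1) x < cumulativeLine g n x ↔ x < g n := by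
  rw [← sub_neg, succ_sub, sub_neg]

theorem forall_lt_iff {N d : ℕ} (hg : Monotone g) (hd : d ≤ N) :
    (∀ d' ≤ N, d' ≠ d → cumulativeLine g d' x < cumulativeLine g d x) ↔
      (0 < d → g (d - 1) < x) ∧ (d < N → x < g d) := by
  constructor
  · intro h
    refine ⟨fun hd0 => ?_, fun hdN => ?_⟩
    · have := h (d - 1) (by omega) (by omega)
      rwa [← Nat.sub_add_cancel hd0, Nat.add_sub_cancel, lt_succ_iff] at this
    · exact succ_lt_iff.1 (h (d + 1) hdN (by omega))
  · rintro ⟨hlo, hhi⟩ d' hd'N hd'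
    rcases hd'.lt_or_gt with hlt | hgt
    · exact lt_of_forall_lt hlt fun k hk =>
        (hg (by simp at hk; omega)).trans_lt (hlo (by omega))
    · exact lt_of_forall_gt hgt fun k hk =>
        (hhi (by omega)).trans_le (hg (by simp at hk; omega))

end cumulativeLine

lemma Monotone.comp_finClamp {α : Type*} [Preorder α] {D : ℕ} {w : Fin (D + 1) → α}
    (hw : Monotone w) : Monotone fun k => w (Fin.clamp k D) :=
  fun _ _ h => hw (Fin.mk_le_mk.2 (min_le_min_right D h))

lemma mem_intervalInterior_iff {D : ℕ} {w : Fin (D + 1) → ℝ} {d : Fin (D + 2)} {x : ℝ} :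
    x ∈ intervalInterior D w d ↔
      (0 < d.val → w (Fin.clamp (d - 1) D) < x) ∧
        (d.val < D + 1 → x < w (Fin.clamp d D)) := by
  have hclamp : ∀ k (hk : k ≤ D), Fin.clamp k D = ⟨k, Nat.lt_succ_of_le hk⟩ :=
    fun k hk => Fin.ext (by simp [hk])
  have hd := d.isLt
  unfold intervalInterior
  split_ifs with h0 hD
  · simp [h0, hclamp 0 D.zero_le]
  · simp [hD, hclamp D le_rfl, Fin.last]
  · rw [Set.mem_Ioo, hclamp _ (by omega), hclamp _ (by omega)]
    exact ⟨fun ⟨hlo, hhi⟩ => ⟨fun _ => hlo, fun _ => hhi⟩,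
      fun ⟨hlo, hhi⟩ => ⟨hlo (by omega), hhi (by omega)⟩⟩

theorem affine_argmax_partition_general (D : ℕ)
    (w : Fin (D + 1) → ℝ) (hw : StrictMono w) :
    ∃ β₀ β₁ : Fin (D + 2) → ℝ,
      ∀ (x : ℝ) (d : Fin (D + 2)),
        (∀ d', d' ≠ d → β₀ d' + β₁ d' * x < β₀ d + β₁ d * x) ↔
          x ∈ intervalInterior D w d := by
  set g : ℕ → ℝ := fun k => w (Fin.clamp k D)
  refine ⟨fun d => -∑ k ∈ range d, g k, fun d => d, fun x d => ?_⟩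
  rw [mem_intervalInterior_iff,
    ← cumulativeLine.forall_lt_iff hw.monotone.comp_finClamp (Nat.le_of_lt_succ d.isLt),
    Fin.forall_iff]
  simp only [Fin.ne_iff_vne, Nat.lt_succ_iff]
  rfl

theorem affine_argmax_partition (D : ℕ) (hD : 2 ≤ D)
    (w : Fin (D + 1) → ℝ) (hw : StrictMono w) :
    ∃ β₀ β₁ : Fin (D + 2) → ℝ,
      ∀ (x : ℝ) (d : Fin (D + 2)),
        (∀ d', d' ≠ d → β₀ d' + β₁ d' * x < β₀ d + β₁ d * x) ↔
          x ∈ intervalInterior D w d :=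
  affine_argmax_partition_general D w hw
end
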